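/- Let (X,d) be a Heine–Borel metric space and p ≥ 1. Suppose μ_n → μ in the p-Wasserstein topology, R_n → R in the Kuratowski sense with R closed, and (μ,k,R) is non-singular. Then for every 1 ≤ k' ≤ k, the optimal clustering costs converge: m_{k',p}(μ_n, R_n) → m_{k',p}(μ, R). -/

import Mathlib

open Filter MeasureTheory Topology TopologicalSpace Metric Set

noncomputable section

/-- Kuratowski lower limit of a sequence of sets. -/
def KurLi {Y : Type*} [TopologicalSpace Y] (A : ℕ → Set Y) : Set Y :=
  {x | ∀ U ∈ nhds x, ∀ᶠ n in atTop, (U ∩ A n).Nonempty}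

/-- Kuratowski upper limit of a sequence of sets. -/
def KurLs {Y : Type*} [TopologicalSpace Y] (A : ℕ → Set Y) : Set Y :=
  {x | ∀ U ∈ nhds x, ∃ᶠ n in atTop, (U ∩ A n).Nonempty}

variable {X : Type*} [MetricSpace X] [MeasurableSpace X]

/-- The clustering cost `W_p(S,μ) = ∫ d(y,S)^p dμ(y)`. -/
def Wp (p : ℝ) (S : Set X) (μ : Measure X) : ℝ :=
  ∫ y, infDist y S ^ p ∂μ

/-- `μ` has a finite `p`-th moment. -/
def FinMom (p : ℝ) (μ : Measure X) : Prop :=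
  ∃ x : X, Integrable (fun y => dist x y ^ p) μ

/-- Convergence in the `p`-Wasserstein topology: weak convergence together with
convergence of the `p`-th moments about some point. -/
def WassTendsto (p : ℝ) (μ : ℕ → Measure X) (ν : Measure X) : Prop :=
  (∀ f : BoundedContinuousFunction X ℝ,
      Tendsto (fun n => ∫ y, f y ∂ μ n) atTop (𝓝 (∫ y, f y ∂ ν))) ∧
  ∃ x : X, Tendsto (fun n => ∫ y, dist x y ^ p ∂ μ n) atTop (𝓝 (∫ y, dist x y ^ p ∂ ν))

/-- `S` is a feasible set of cluster centers: a nonempty finite subset of `R`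
with at most `k` points. -/
def Feas (k : ℕ) (R S : Set X) : Prop :=
  S ⊆ R ∧ S.Finite ∧ S.Nonempty ∧ S.ncard ≤ k

/-- The optimal clustering cost `m_{k,p}(μ,R)`. -/
def mCost (p : ℝ) (μ : Measure X) (k : ℕ) (R : Set X) : ℝ :=
  sInf ((fun S => Wp p S μ) '' {S | Feas k R S})

/-- The set of optimal cluster-center sets `C_p(μ,k,R)`, viewed as a subset of the
hyperspace of nonempty compact subsets of `X` with the Hausdorff metric. -/
def Cp (p : ℝ) (μ : Measure X) (k : ℕ) (R : Set X) : Set (NonemptyCompacts X) :=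
  {S | Feas k R (S : Set X) ∧ ∀ T : Set X, Feas k R T → Wp p (S : Set X) μ ≤ Wp p T μ}

/-- The support of a measure on a metric space. -/
def measSupp (μ : Measure X) : Set X :=
  {x | ∀ r : ℝ, 0 < r → μ (Metric.ball x r) ≠ 0}

/-!
Upper bound: a near-optimal centre set `S ⊆ R₀` for `ν` is moved point by point into `R n`
(possible eventually, since `R₀` is the Kuratowski lower limit), giving feasible `T` with
`d(·, T) ≤ d(·, S) + δ`. The integrand `(d(·, S) + δ)^p` has `p`-growth, so under `W_p`
convergence its `μ n`-integrals tend to its `ν`-integral, and `δ → 0` gives `limsup ≤ m(ν, R₀)`.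

Lower bound: along a subsequence with small costs, index near-optimal centres by `Fin k'` and
extract again so that each centre either converges, necessarily to a point of the upper limit
`R₀`, or escapes to infinity. Escaping centres are invisible on bounded sets, so on every ball
`d(·, T n) ≥ d(·, S) - δ` eventually, where `S ⊆ R₀` is the set of limits. A Fatou lemma for
weakly converging measures then bounds `∫ d(·, S)^p dν`, hence `m(ν, R₀)`, by the costs.
-/

open scoped BoundedContinuousFunction

section PowerBounds

variable {Y : Type*} [PseudoMetricSpace Y] {p : ℝ}

theorem Real.rpow_add_le_mul_rpow_add_rpow {a b : ℝ} (ha : 0 ≤ a) (hb : 0 ≤ b) (hp : 1 ≤ p) :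
    (a + b) ^ p ≤ 2 ^ (p - 1) * (a ^ p + b ^ p) := by
  exact_mod_cast NNReal.rpow_add_le_mul_rpow_add_rpow ⟨a, ha⟩ ⟨b, hb⟩ hp

theorem rpow_dist_add_le (hp : 1 ≤ p) (x y : Y) {C : ℝ} (hC : 0 ≤ C) :
    (dist x y + C) ^ p ≤ 2 ^ (p - 1) * C ^ p + 2 ^ (p - 1) * dist x y ^ p := by
  rw [add_comm (dist x y), ← mul_add]
  exact Real.rpow_add_le_mul_rpow_add_rpow hC dist_nonneg hp

theorem infDist_add_rpow_le (hp : 1 ≤ p) {S : Set Y} {s : Y} (hs : s ∈ S) {δ : ℝ} (hδ : 0 ≤ δ)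
    (x y : Y) :
    (infDist y S + δ) ^ p ≤ 2 ^ (p - 1) * (dist x s + δ) ^ p + 2 ^ (p - 1) * dist x y ^ p := by
  have hyS : infDist y S ≤ dist y s := infDist_le_dist_of_mem hs
  calc (infDist y S + δ) ^ p ≤ (dist x y + (dist x s + δ)) ^ p :=
        Real.rpow_le_rpow (by linarith [infDist_nonneg (x := y) (s := S)])
          (by linarith [dist_triangle y x s, dist_comm x y]) (by linarith)
    _ ≤ _ := rpow_dist_add_le hp x y (by positivity)

end PowerBounds

section Moments

variable {Y : Type*} [MetricSpace Y] [MeasurableSpace Y] [BorelSpace Y] {p : ℝ}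
  {ρ : Measure Y} [IsFiniteMeasure ρ]

theorem FinMom.integrable_dist_rpow (hρ : FinMom p ρ) (hp : 1 ≤ p) (x : Y) :
    Integrable (fun y => dist x y ^ p) ρ := by
  obtain ⟨w, hw⟩ := hρ
  refine ((integrable_const (2 ^ (p - 1) * dist x w ^ p)).add
    (hw.const_mul (2 ^ (p - 1)))).mono' ((continuous_const.dist continuous_id).rpow_const
      fun _ => Or.inr (by linarith)).aestronglyMeasurable (Eventually.of_forall fun y => ?_)
  rw [Real.norm_of_nonneg (by positivity)]
  calc dist x y ^ p ≤ (dist w y + dist x w) ^ p := by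
        gcongr
        linarith [dist_triangle x w y]
    _ ≤ _ := rpow_dist_add_le hp w y dist_nonneg

theorem FinMom.integrable_add_mul_dist_rpow (hρ : FinMom p ρ) (hp : 1 ≤ p) (x : Y) (A B : ℝ) :
    Integrable (fun y => A + B * dist x y ^ p) ρ :=
  (integrable_const A).add ((hρ.integrable_dist_rpow hp x).const_mul B)

theorem FinMom.integrable_of_le_add_mul_dist_rpow (hρ : FinMom p ρ) (hp : 1 ≤ p) {g : Y → ℝ}
    (hg : Continuous g) (hg0 : ∀ y, 0 ≤ g y) {x : Y} {A B : ℝ}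
    (hgA : ∀ y, g y ≤ A + B * dist x y ^ p) : Integrable g ρ :=
  (hρ.integrable_add_mul_dist_rpow hp x A B).mono' hg.aestronglyMeasurable
    (Eventually.of_forall fun y => (Real.norm_of_nonneg (hg0 y)).trans_le (hgA y))

theorem FinMom.integrable_infDist_add_rpow (hρ : FinMom p ρ) (hp : 1 ≤ p) {S : Set Y}
    (hS : S.Nonempty) {δ : ℝ} (hδ : 0 ≤ δ) :
    Integrable (fun y => (infDist y S + δ) ^ p) ρ := by
  obtain ⟨s, hs⟩ := hS
  exact hρ.integrable_of_le_add_mul_dist_rpow hp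
    (((continuous_infDist_pt S).add continuous_const).rpow_const fun _ => Or.inr (by linarith))
    (fun y => Real.rpow_nonneg (add_nonneg infDist_nonneg hδ) p) (infDist_add_rpow_le hp hs hδ s)

theorem FinMom.integrable_infDist_rpow (hρ : FinMom p ρ) (hp : 1 ≤ p) {S : Set Y}
    (hS : S.Nonempty) : Integrable (fun y => infDist y S ^ p) ρ := by
  simpa using hρ.integrable_infDist_add_rpow hp hS le_rfl

theorem FinMom.integral_add_mul_dist_rpow [IsProbabilityMeasure ρ] (hρ : FinMom p ρ) (hp : 1 ≤ p)
    (x : Y) (A B : ℝ) : ∫ y, (A + B * dist x y ^ p) ∂ρ = A + B * ∫ y, dist x y ^ p ∂ρ := by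
  rw [integral_add (integrable_const _) ((hρ.integrable_dist_rpow hp x).const_mul _),
    integral_const_mul, integral_const]
  simp

end Moments

section Feasible

variable {Y : Type*} {k : ℕ} {R S : Set Y}

theorem feas_iff_exists_range (hk : 1 ≤ k) :
    Feas k R S ↔ S ⊆ R ∧ ∃ e : Fin k → Y, range e = S := by
  constructor
  · rintro ⟨hSR, hfin, ⟨s, hs⟩, hcard⟩
    have := hfin.fintype
    have : Nonempty S := ⟨⟨s, hs⟩⟩
    obtain ⟨g⟩ : Nonempty (S ↪ Fin k) := Function.Embedding.nonempty_of_card_le (by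
      simpa [← Set.ncard_eq_toFinset_card'] using hcard)
    refine ⟨hSR, fun i => (Function.invFun g i : S), ?_⟩
    refine Subset.antisymm (range_subset_iff.2 fun i => (Function.invFun g i).2) fun x hx => ?_
    exact ⟨g ⟨x, hx⟩, by simp [Function.leftInverse_invFun g.injective ⟨x, hx⟩]⟩
  · rintro ⟨hSR, e, rfl⟩
    have : Nonempty (Fin k) := ⟨⟨0, hk⟩⟩
    refine ⟨hSR, finite_range e, range_nonempty e, ?_⟩
    rw [← Nat.card_coe_set_eq]
    simpa using Finite.card_range_le e

theorem Feas.mono {R' : Set Y} (hS : Feas k R S) (hR : R ⊆ R') : Feas k R' S :=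
  ⟨hS.1.trans hR, hS.2⟩

end Feasible

section Cost

variable {Y : Type*} [MetricSpace Y] [MeasurableSpace Y] {p : ℝ} {μ : Measure Y} {k : ℕ}
  {R S : Set Y}

theorem Wp_nonneg : 0 ≤ Wp p S μ :=
  integral_nonneg fun _ => Real.rpow_nonneg infDist_nonneg p

theorem mCost_le_Wp (hS : Feas k R S) : mCost p μ k R ≤ Wp p S μ :=
  csInf_le ⟨0, fun _ ⟨_, _, hT⟩ => hT ▸ Wp_nonneg⟩ ⟨S, hS, rfl⟩

theorem exists_feas_Wp_lt (hk : 1 ≤ k) (hR : R.Nonempty) {c : ℝ} (hc : mCost p μ k R < c) :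
    ∃ S, Feas k R S ∧ Wp p S μ < c := by
  obtain ⟨x, hxR⟩ := hR
  have : Nonempty (Fin k) := ⟨⟨0, hk⟩⟩
  have hx : {x} ∈ {S | Feas k R S} :=
    (feas_iff_exists_range hk).2 ⟨singleton_subset_iff.2 hxR, fun _ => x, range_const⟩
  obtain ⟨_, ⟨S, hS, rfl⟩, hSc⟩ := exists_lt_of_csInf_lt ⟨_, mem_image_of_mem _ hx⟩ hc
  exact ⟨S, hS, hSc⟩

end Cost

section WeakFatou

variable {Y : Type*} [PseudoMetricSpace Y] [MeasurableSpace Y] [OpensMeasurableSpace Y]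
  {μ : ℕ → Measure Y} [∀ n, IsFiniteMeasure (μ n)] {ν : Measure Y} {p : ℝ}

theorem integral_rpow_le_of_frequently_le
    (hμν : ∀ f : Y →ᵇ ℝ, Tendsto (fun n => ∫ y, f y ∂μ n) atTop (𝓝 (∫ y, f y ∂ν)))
    (hp : 0 ≤ p) (x : Y) {u : Y → ℝ} (hu : Continuous u) (hu0 : ∀ y, 0 ≤ u y)
    (huν : Integrable (fun y => u y ^ p) ν) {v : ℕ → Y → ℝ} (hv0 : ∀ n y, 0 ≤ v n y)
    (hvμ : ∀ n, Integrable (fun y => v n y ^ p) (μ n))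
    (huv : ∀ r δ : ℝ, 0 < δ → ∀ᶠ n in atTop, ∀ y ∈ closedBall x r, u y - δ ≤ v n y)
    {c : ℝ} (hc : ∃ᶠ n in atTop, ∫ y, v n y ^ p ∂μ n ≤ c) :
    ∫ y, u y ^ p ∂ν ≤ c := by
  -- `w r δ ^ p` is bounded continuous and eventually below `v n ^ p`; it tends to `u ^ p`
  -- as `r → ∞` and `δ → 0`.
  set w : ℝ → ℝ → Y → ℝ := fun r δ y => max (min (u y - δ) (r - dist y x)) 0 with hw
  have hw_cont : ∀ r δ, Continuous fun y => w r δ y ^ p := fun r δ =>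
    (((hu.sub continuous_const).min (continuous_const.sub
      (continuous_id.dist continuous_const))).max continuous_const).rpow_const fun _ => Or.inr hp
  have hw_le_v : ∀ r δ, 0 < δ → ∀ᶠ n in atTop, ∀ y, w r δ y ≤ v n y := fun r δ hδ =>
    (huv r δ hδ).mono fun n hn y => by
      by_cases hy : y ∈ closedBall x r
      · exact max_le ((min_le_left _ _).trans (hn y hy)) (hv0 n y)
      · rw [mem_closedBall, not_le] at hy
        exact max_le ((min_le_right _ _).trans (by linarith [hv0 n y])) (hv0 n y)
  have hbound : ∀ r δ, 0 < δ → ∫ y, w r δ y ^ p ∂ν ≤ c := by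
    intro r δ hδ
    have hw_le_r : ∀ y, w r δ y ^ p ≤ max r 0 ^ p := fun y =>
      Real.rpow_le_rpow (le_max_right _ _) (max_le_max ((min_le_right _ _).trans
        (by linarith [dist_nonneg (x := y) (y := x)])) le_rfl) hp
    let f : Y →ᵇ ℝ := .ofNormedAddCommGroup _ (hw_cont r δ) (max r 0 ^ p) fun y => by
      rw [Real.norm_of_nonneg (Real.rpow_nonneg (le_max_right _ _) _)]
      exact hw_le_r y
    refine le_of_tendsto_of_frequently (hμν f)
      ((hc.and_eventually (hw_le_v r δ hδ)).mono fun n ⟨hn, hwv⟩ => ?_)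
    exact (integral_mono (f.integrable _) (hvμ n)
      fun y => Real.rpow_le_rpow (le_max_right _ _) (hwv y) hp).trans hn
  have hlim : ∀ y, Tendsto (fun n : ℕ => w n (1 / (n + 1)) y ^ p) atTop (𝓝 (u y ^ p)) := by
    intro y
    have hmax : Tendsto (fun n : ℕ => max (u y - 1 / (n + 1)) 0) atTop (𝓝 (u y)) := by
      have := ((tendsto_const_nhds (x := u y)).sub tendsto_one_div_add_atTop_nhds_zero_nat).max
        (tendsto_const_nhds (x := (0 : ℝ)))
      rwa [sub_zero, max_eq_left (hu0 y)] at this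
    refine (hmax.rpow_const (Or.inr hp)).congr' ?_
    filter_upwards [tendsto_natCast_atTop_atTop.eventually_ge_atTop (u y + dist y x)] with n hn
    have : u y - 1 / (n + 1) ≤ n - dist y x := by
      have : (0 : ℝ) ≤ 1 / (n + 1) := by positivity
      linarith
    simp only [hw, min_eq_left this]
  refine le_of_tendsto' (tendsto_integral_of_dominated_convergence (fun y => u y ^ p)
    (fun n => (hw_cont _ _).aestronglyMeasurable) huν (fun n => Eventually.of_forall fun y => ?_)
    (Eventually.of_forall hlim)) fun n => hbound _ _ (by positivity)
  have : (0 : ℝ) < 1 / (n + 1) := by positivity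
  rw [Real.norm_of_nonneg (Real.rpow_nonneg (le_max_right _ _) _)]
  exact Real.rpow_le_rpow (le_max_right _ _)
    (max_le ((min_le_left _ _).trans (by linarith)) (hu0 y)) hp

end WeakFatou

section Wasserstein

variable {Y : Type*} [MetricSpace Y] [MeasurableSpace Y] [BorelSpace Y]
  {μ : ℕ → Measure Y} [∀ n, IsProbabilityMeasure (μ n)] {ν : Measure Y} [IsProbabilityMeasure ν]
  {p : ℝ}

theorem eventually_integral_lt_of_le_add_mul_dist_rpow
    (hμν : ∀ f : Y →ᵇ ℝ, Tendsto (fun n => ∫ y, f y ∂μ n) atTop (𝓝 (∫ y, f y ∂ν))) (x : Y)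
    (hmom : Tendsto (fun n => ∫ y, dist x y ^ p ∂μ n) atTop (𝓝 (∫ y, dist x y ^ p ∂ν)))
    (hp : 1 ≤ p) (hμ : ∀ n, FinMom p (μ n)) (hν : FinMom p ν) {g : Y → ℝ} (hg : Continuous g)
    (hg0 : ∀ y, 0 ≤ g y) {A B : ℝ} (hgA : ∀ y, g y ≤ A + B * dist x y ^ p) {c : ℝ}
    (hc : ∫ y, g y ∂ν < c) :
    ∀ᶠ n in atTop, ∫ y, g y ∂μ n < c := by
  -- Weak Fatou for the nonnegative `A + B * dist x y ^ p - g y`, whose integrals against `μ n`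
  -- are controlled by moment convergence.
  have hG : Continuous fun y => A + B * dist x y ^ p := continuous_const.add
    (continuous_const.mul ((continuous_const.dist continuous_id).rpow_const
      fun _ => Or.inr (by linarith)))
  have hint : ∀ (ρ : Measure Y) [IsProbabilityMeasure ρ], FinMom p ρ →
      Integrable (fun y => (A + B * dist x y ^ p - g y) ^ (1 : ℝ)) ρ := fun ρ _ hρ => by
    simp only [Real.rpow_one]
    exact (hρ.integrable_add_mul_dist_rpow hp x A B).sub
      (hρ.integrable_of_le_add_mul_dist_rpow hp hg hg0 hgA)
  have hgap : ∀ (ρ : Measure Y) [IsProbabilityMeasure ρ], FinMom p ρ →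
      ∫ y, (A + B * dist x y ^ p - g y) ^ (1 : ℝ) ∂ρ =
        A + B * ∫ y, dist x y ^ p ∂ρ - ∫ y, g y ∂ρ := by
    intro ρ _ hρ
    simp only [Real.rpow_one]
    rw [integral_sub (hρ.integrable_add_mul_dist_rpow hp x A B)
      (hρ.integrable_of_le_add_mul_dist_rpow hp hg hg0 hgA), hρ.integral_add_mul_dist_rpow hp]
  obtain ⟨η, hη, hηc⟩ : ∃ η > 0, ∫ y, g y ∂ν + η < c :=
    ⟨_, half_pos (sub_pos.2 hc), by linarith⟩
  by_contra h
  rw [not_eventually] at h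
  have hmomη : ∀ᶠ n in atTop,
      A + B * ∫ y, dist x y ^ p ∂μ n < A + B * ∫ y, dist x y ^ p ∂ν + η :=
    (tendsto_const_nhds.add (hmom.const_mul B)).eventually_lt_const (lt_add_of_pos_right _ hη)
  have key := integral_rpow_le_of_frequently_le hμν zero_le_one x
    (u := fun y => A + B * dist x y ^ p - g y) (hG.sub hg) (fun y => by linarith [hgA y])
    (hint ν hν) (v := fun _ y => A + B * dist x y ^ p - g y)
    (fun _ y => by linarith [hgA y]) (fun n => hint (μ n) (hμ n))
    (fun _ _ _ => Eventually.of_forall fun _ _ _ => by linarith)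
    (c := A + B * ∫ y, dist x y ^ p ∂ν + η - c)
    ((h.and_eventually hmomη).mono fun n ⟨hn, hnη⟩ => by
      rw [hgap (μ n) (hμ n)]
      linarith [not_lt.1 hn])
  rw [hgap ν hν] at key
  linarith

theorem exists_pos_integral_infDist_add_rpow_lt (hp : 1 ≤ p) (hν : FinMom p ν) {S : Set Y}
    (hS : S.Nonempty) {c : ℝ} (hc : Wp p S ν < c) :
    ∃ δ > 0, ∫ y, (infDist y S + δ) ^ p ∂ν < c := by
  have hp0 : 0 ≤ p := by linarith
  have hlim : Tendsto (fun n : ℕ => ∫ y, (infDist y S + 1 / (n + 1)) ^ p ∂ν) atTop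
      (𝓝 (Wp p S ν)) := by
    refine tendsto_integral_of_dominated_convergence (fun y => (infDist y S + 1) ^ p)
      (fun n => (((continuous_infDist_pt S).add continuous_const).rpow_const
        fun _ => Or.inr hp0).aestronglyMeasurable)
      (hν.integrable_infDist_add_rpow hp hS zero_le_one)
      (fun n => Eventually.of_forall fun y => ?_) (Eventually.of_forall fun y => ?_)
    · have := infDist_nonneg (x := y) (s := S)
      have h1 : (1 : ℝ) / (n + 1) ≤ 1 :=
        div_le_one_of_le₀ (by linarith [n.cast_nonneg (α := ℝ)]) (by positivity)
      rw [Real.norm_of_nonneg (Real.rpow_nonneg (by positivity) _)]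
      exact Real.rpow_le_rpow (by positivity) (by linarith) hp0
    · simpa using ((tendsto_const_nhds (x := infDist y S)).add
        tendsto_one_div_add_atTop_nhds_zero_nat).rpow_const (Or.inr hp0)
  obtain ⟨n, hn⟩ := (hlim.eventually_lt_const hc).exists
  exact ⟨1 / (n + 1), by positivity, hn⟩

end Wasserstein

section Kuratowski

variable {Y : Type*} [PseudoMetricSpace Y] {R : ℕ → Set Y}

theorem eventually_nonempty_of_mem_kurLi {x : Y} (hx : x ∈ KurLi R) :
    ∀ᶠ n in atTop, (R n).Nonempty :=
  (hx univ univ_mem).mono fun _ ⟨y, _, hy⟩ => ⟨y, hy⟩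

theorem mem_kurLs_of_tendsto {σ : ℕ → ℕ} (hσ : Tendsto σ atTop atTop) {y : ℕ → Y}
    (hy : ∀ n, y n ∈ R (σ n)) {x : Y} (hx : Tendsto y atTop (𝓝 x)) : x ∈ KurLs R := fun _ hU =>
  hσ.frequently ((hx.eventually_mem hU).mono fun n hn => ⟨y n, hn, hy n⟩).frequently

theorem eventually_exists_feas_infDist_le_add {k : ℕ} {S : Set Y} (hS : Feas k (KurLi R) S)
    {δ : ℝ} (hδ : 0 < δ) :
    ∀ᶠ n in atTop, ∃ T, Feas k (R n) T ∧ ∀ y, infDist y T ≤ infDist y S + δ := by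
  obtain ⟨hSR, hfin, hne, hcard⟩ := hS
  filter_upwards [(eventually_all_finite hfin).2 fun s hs =>
    hSR hs (ball s δ) (ball_mem_nhds s hδ)] with n hn
  choose! a hab haR using hn
  refine ⟨a '' S, ⟨image_subset_iff.2 haR, hfin.image a, hne.image a,
    (ncard_image_le hfin).trans hcard⟩, fun y => ?_⟩
  rw [← sub_le_iff_le_add, le_infDist hne]
  intro s hs
  linarith [infDist_le_dist_of_mem (mem_image_of_mem a hs) (x := y), dist_triangle y s (a s),
    mem_ball'.1 (hab s hs)]

theorem eventually_infDist_sub_le_dist {S : Set Y} {s : Y} (hs : s ∈ S) {c : ℕ → Y} (x : Y)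
    (hc : Tendsto c atTop (𝓝 s) ∨ Tendsto (fun n => dist x (c n)) atTop atTop) (r : ℝ) {δ : ℝ}
    (hδ : 0 < δ) :
    ∀ᶠ n in atTop, ∀ y ∈ closedBall x r, infDist y S - δ ≤ dist y (c n) := by
  have hyS : ∀ y, infDist y S ≤ dist y s := fun y => infDist_le_dist_of_mem hs
  rcases hc with hc | hc
  · filter_upwards [Metric.tendsto_nhds.1 hc δ hδ] with n hn y _
    linarith [hyS y, dist_triangle y (c n) s]
  · filter_upwards [hc.eventually_ge_atTop (2 * r + dist x s)] with n hn y hy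
    rw [mem_closedBall] at hy
    linarith [hyS y, dist_triangle y x s, dist_triangle x y (c n), dist_comm x y]

theorem eventually_infDist_sub_le_infDist_range {ι : Type*} [Finite ι] [Nonempty ι] {S : Set Y}
    {c : ℕ → ι → Y} (x : Y)
    (hc : ∀ i, ∃ s ∈ S, Tendsto (fun n => c n i) atTop (𝓝 s) ∨
      Tendsto (fun n => dist x (c n i)) atTop atTop) (r : ℝ) {δ : ℝ} (hδ : 0 < δ) :
    ∀ᶠ n in atTop, ∀ y ∈ closedBall x r, infDist y S - δ ≤ infDist y (range (c n)) := by
  choose s hs hcs using hc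
  filter_upwards [eventually_all.2 fun i => eventually_infDist_sub_le_dist (hs i) x (hcs i) r hδ]
    with n hn y hy
  exact (le_infDist (range_nonempty _)).2 (forall_mem_range.2 fun i => hn i y hy)

end Kuratowski

section Extraction

variable {Y : Type*} [PseudoMetricSpace Y] [ProperSpace Y]

theorem exists_subseq_tendsto_or_tendsto_dist_atTop (x : Y) (u : ℕ → Y) :
    ∃ φ : ℕ → ℕ, StrictMono φ ∧ ((∃ a, Tendsto (u ∘ φ) atTop (𝓝 a)) ∨
      Tendsto (fun n => dist x (u (φ n))) atTop atTop) := by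
  by_cases h : ∃ C, ∃ᶠ n in atTop, u n ∈ closedBall x C
  · obtain ⟨C, hC⟩ := h
    obtain ⟨a, -, φ, hφ, ha⟩ := tendsto_subseq_of_frequently_bounded isBounded_closedBall hC
    exact ⟨φ, hφ, Or.inl ⟨a, ha⟩⟩
  · simp only [not_exists, not_frequently] at h
    refine ⟨id, strictMono_id, Or.inr (tendsto_atTop.2 fun C => (h C).mono fun n hn => ?_)⟩
    rw [mem_closedBall, not_le, dist_comm] at hn
    exact hn.le

theorem exists_subseq_forall_tendsto_or_tendsto_dist_atTop (x : Y) :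
    ∀ {k : ℕ} (u : ℕ → Fin k → Y), ∃ φ : ℕ → ℕ, StrictMono φ ∧ ∀ i,
      (∃ a, Tendsto (fun n => u (φ n) i) atTop (𝓝 a)) ∨
        Tendsto (fun n => dist x (u (φ n) i)) atTop atTop
  | 0, _ => ⟨id, strictMono_id, fun i => i.elim0⟩
  | k + 1, u => by
    obtain ⟨φ, hφ, hu⟩ :=
      exists_subseq_forall_tendsto_or_tendsto_dist_atTop x fun n i => u n (Fin.castSucc i)
    obtain ⟨ψ, hψ, hlast⟩ :=
      exists_subseq_tendsto_or_tendsto_dist_atTop x fun n => u (φ n) (Fin.last k)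
    refine ⟨φ ∘ ψ, hφ.comp hψ, fun i => Fin.lastCases hlast (fun i => ?_) i⟩
    rcases hu i with ⟨a, ha⟩ | ha
    · exact Or.inl ⟨a, ha.comp hψ.tendsto_atTop⟩
    · exact Or.inr (ha.comp hψ.tendsto_atTop)

end Extraction

section Convergence

variable {Y : Type*} [MetricSpace Y] [MeasurableSpace Y] [BorelSpace Y]
  {μ : ℕ → Measure Y} [∀ n, IsProbabilityMeasure (μ n)] {ν : Measure Y} [IsProbabilityMeasure ν]
  {p : ℝ} {k : ℕ} {R : ℕ → Set Y}

theorem eventually_mCost_lt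
    (hμν : ∀ f : Y →ᵇ ℝ, Tendsto (fun n => ∫ y, f y ∂μ n) atTop (𝓝 (∫ y, f y ∂ν))) (x : Y)
    (hmom : Tendsto (fun n => ∫ y, dist x y ^ p ∂μ n) atTop (𝓝 (∫ y, dist x y ^ p ∂ν)))
    (hp : 1 ≤ p) (hμ : ∀ n, FinMom p (μ n)) (hν : FinMom p ν) {S : Set Y}
    (hS : Feas k (KurLi R) S) {c : ℝ} (hc : Wp p S ν < c) :
    ∀ᶠ n in atTop, mCost p (μ n) k (R n) < c := by
  have hp0 : 0 ≤ p := by linarith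
  obtain ⟨s, hs⟩ := hS.2.2.1
  obtain ⟨δ, hδ, hδc⟩ := exists_pos_integral_infDist_add_rpow_lt hp hν ⟨s, hs⟩ hc
  have hμδ := eventually_integral_lt_of_le_add_mul_dist_rpow hμν x hmom hp hμ hν
    (((continuous_infDist_pt S).add continuous_const).rpow_const fun _ => Or.inr hp0)
    (fun y => Real.rpow_nonneg (add_nonneg infDist_nonneg hδ.le) p)
    (infDist_add_rpow_le hp hs hδ.le x) hδc
  filter_upwards [hμδ, eventually_exists_feas_infDist_le_add hS hδ] with n hn ⟨T, hT, hTS⟩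
  calc mCost p (μ n) k (R n) ≤ Wp p T (μ n) := mCost_le_Wp hT
    _ ≤ ∫ y, (infDist y S + δ) ^ p ∂μ n :=
      integral_mono ((hμ n).integrable_infDist_rpow hp hT.2.2.1)
        ((hμ n).integrable_infDist_add_rpow hp ⟨s, hs⟩ hδ.le)
        fun y => Real.rpow_le_rpow infDist_nonneg (hTS y) hp0
    _ < c := hn

theorem mCost_le_of_frequently_mCost_lt [ProperSpace Y]
    (hμν : ∀ f : Y →ᵇ ℝ, Tendsto (fun n => ∫ y, f y ∂μ n) atTop (𝓝 (∫ y, f y ∂ν)))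
    (hp : 1 ≤ p) (hμ : ∀ n, FinMom p (μ n)) (hν : FinMom p ν) (hk : 1 ≤ k) {R₀ : Set Y}
    (hR₀ : R₀.Nonempty) (hLs : KurLs R ⊆ R₀) (hR : ∀ᶠ n in atTop, (R n).Nonempty) {c : ℝ}
    (hc : ∃ᶠ n in atTop, mCost p (μ n) k (R n) < c) :
    mCost p ν k R₀ ≤ c := by
  obtain ⟨x, hx⟩ := hR₀
  have : Nonempty (Fin k) := ⟨⟨0, hk⟩⟩
  obtain ⟨φ, hφ, hφc⟩ := extraction_of_frequently_atTop (hc.and_eventually hR)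
  have hT : ∀ n, ∃ e : Fin k → Y, range e ⊆ R (φ n) ∧ Wp p (range e) (μ (φ n)) < c := fun n => by
    obtain ⟨T, hT, hTc⟩ := exists_feas_Wp_lt hk (hφc n).2 (hφc n).1
    obtain ⟨hTR, e, rfl⟩ := (feas_iff_exists_range hk).1 hT
    exact ⟨e, hTR, hTc⟩
  choose e heR hec using hT
  obtain ⟨ψ, hψ, he⟩ := exists_subseq_forall_tendsto_or_tendsto_dist_atTop x e
  have hσ : Tendsto (φ ∘ ψ) atTop atTop := (hφ.comp hψ).tendsto_atTop
  -- An escaping centre is given the point `x ∈ R₀`; extra points only lower `infDist · S`.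
  have hd : ∀ i, ∃ s ∈ R₀, Tendsto (fun n => e (ψ n) i) atTop (𝓝 s) ∨
      Tendsto (fun n => dist x (e (ψ n) i)) atTop atTop := fun i => by
    rcases he i with ⟨s, hs⟩ | hs
    · exact ⟨s, hLs (mem_kurLs_of_tendsto hσ (fun n => heR _ (mem_range_self i)) hs), Or.inl hs⟩
    · exact ⟨x, hx, Or.inr hs⟩
  choose d hdR hd using hd
  calc mCost p ν k R₀ ≤ Wp p (range d) ν :=
        mCost_le_Wp ((feas_iff_exists_range hk).2 ⟨range_subset_iff.2 hdR, d, rfl⟩)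
    _ ≤ c := integral_rpow_le_of_frequently_le (μ := fun n => μ (φ (ψ n)))
        (fun f => (hμν f).comp hσ) (by linarith) x (continuous_infDist_pt _)
        (fun _ => infDist_nonneg) (hν.integrable_infDist_rpow hp (range_nonempty d))
        (fun _ _ => infDist_nonneg)
        (fun _ => (hμ _).integrable_infDist_rpow hp (range_nonempty _))
        (fun r _ hδ => eventually_infDist_sub_le_infDist_range x
          (fun i => ⟨d i, mem_range_self i, hd i⟩) r hδ)
        (Frequently.of_forall fun n => (hec (ψ n)).le)

end Convergence

theorem stmt13_general {X : Type*} [MetricSpace X] [ProperSpace X] [MeasurableSpace X] [BorelSpace X]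
    (p : ℝ) (hp : 1 ≤ p) (μ : ℕ → Measure X) (ν : Measure X)
    [∀ n, IsProbabilityMeasure (μ n)] [IsProbabilityMeasure ν]
    (hμ : ∀ n, FinMom p (μ n)) (hν : FinMom p ν) (hconv : WassTendsto p μ ν)
    (k : ℕ)
    (R : ℕ → Set X) (R₀ : Set X)
    (hR₀ne : R₀.Nonempty) (hLi : KurLi R = R₀) (hLs : KurLs R = R₀) :
    ∀ k' : ℕ, 1 ≤ k' → k' ≤ k →
      Tendsto (fun n => mCost p (μ n) k' (R n)) atTop (𝓝 (mCost p ν k' R₀)) := by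
  intro k' hk' _
  obtain ⟨x, hmom⟩ := hconv.2
  have hR : ∀ᶠ n in atTop, (R n).Nonempty :=
    eventually_nonempty_of_mem_kurLi (hLi.ge hR₀ne.some_mem)
  refine tendsto_order.2 ⟨fun a ha => ?_, fun a ha => ?_⟩
  · obtain ⟨b, hab, hb⟩ := exists_between ha
    have hbn : ∀ᶠ n in atTop, b ≤ mCost p (μ n) k' (R n) := by
      by_contra h
      simp only [not_eventually, not_le] at h
      exact hb.not_ge (mCost_le_of_frequently_mCost_lt hconv.1 hp hμ hν hk' hR₀ne hLs.le hR h)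
    exact hbn.mono fun n hn => hab.trans_le hn
  · obtain ⟨S, hS, hSa⟩ := exists_feas_Wp_lt hk' hR₀ne ha
    exact eventually_mCost_lt hconv.1 x hmom hp hμ hν (hS.mono hLi.ge) hSa

/-- Convergence of optimal clustering costs: under Wasserstein convergence of measures and
Kuratowski convergence of the domains, if `(μ,k,R)` is non-singular then
`m_{k',p}(μ_n,R_n) → m_{k',p}(μ,R)` for every `1 ≤ k' ≤ k`. -/
theorem stmt13 {X : Type*} [MetricSpace X] [ProperSpace X] [MeasurableSpace X] [BorelSpace X]
    (p : ℝ) (hp : 1 ≤ p) (μ : ℕ → Measure X) (ν : Measure X)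
    [∀ n, IsProbabilityMeasure (μ n)] [IsProbabilityMeasure ν]
    (hμ : ∀ n, FinMom p (μ n)) (hν : FinMom p ν) (hconv : WassTendsto p μ ν)
    (k : ℕ) (hk : 1 ≤ k)
    (R : ℕ → Set X) (R₀ : Set X) (hRc : ∀ n, IsClosed (R n)) (hR₀ : IsClosed R₀)
    (hR₀ne : R₀.Nonempty) (hLi : KurLi R = R₀) (hLs : KurLs R = R₀)
    (hns : ∀ j : ℕ, 1 ≤ j → j < k → mCost p ν (j + 1) R₀ < mCost p ν j R₀) :
    ∀ k' : ℕ, 1 ≤ k' → k' ≤ k →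
      Tendsto (fun n => mCost p (μ n) k' (R n)) atTop (𝓝 (mCost p ν k' R₀)) :=
  stmt13_general p hp μ ν hμ hν hconv k R R₀ hR₀ne hLi hLs
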